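/- Let λ ∈ ℝ^{n+1} lie in the open cone Γ_k^+ (σ_1(λ) > 0, …, σ_k(λ) > 0) for 1 ≤ k ≤ n, and suppose ((n+1−k)/(n+1))·σ_k(λ)·σ_1(λ) − (k+1)·σ_{k+1}(λ) = 0. Then all components of λ are equal: λ_1 = λ_2 = ⋯ = λ_{n+1}. -/

import Mathlib

/-!
Write `E_j = σ_j / C(m, j)` for the normalised elementary symmetric means of `x ∈ ℝ^m`.
Newton's inequalities `E_j E_{j+2} ≤ E_{j+1}²` hold for every real `x`: by Rolle's theorem the
derivative of `∏ (X - x_i)` has `m - 1` real roots with the same means, which reduces to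
`m = j + 2`, and there the means of `x` at levels `j, j+1, j+2` are the means of
`b_i = ∏_{l ≠ i} x_l` at levels `0, 1, 2`, so the inequality is Cauchy–Schwarz for `b`.

The hypothesis says `E_{k+1} = E_k E_1`. If `E_2 < E_1²`, then multiplying the Newton
inequalities along the positive chain `E_1, …, E_k` gives `E_{k+1} < E_k E_1`; hence
`E_2 = E_1²`, the equality case of Cauchy–Schwarz, which forces all `λ_i` to be equal.
-/

open Finset

/-- The k-th elementary symmetric polynomial of `x ∈ ℝ^m`. -/
def esym {m : ℕ} (k : ℕ) (x : Fin m → ℝ) : ℝ :=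
  ∑ s ∈ Finset.univ.powersetCard k, ∏ i ∈ s, x i

open Polynomial

namespace Multiset

lemma esymm_cons_succ {R : Type*} [CommSemiring R] (a : R) (s : Multiset R) (k : ℕ) :
    (a ::ₘ s).esymm (k + 1) = a * s.esymm k + s.esymm (k + 1) := by
  simp only [esymm, powersetCard_cons, map_add, sum_add, map_map, Function.comp_def, prod_cons,
    sum_map_mul_left, add_comm]

lemma sq_sum_eq_sum_map_sq_add_two_mul_esymm {R : Type*} [CommSemiring R] (s : Multiset R) :
    s.sum ^ 2 = (s.map (· ^ 2)).sum + 2 * s.esymm 2 := by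
  induction s using Multiset.induction with
  | empty => simp [esymm, powersetCard_zero_right]
  | cons a s ih =>
    have hesymm_one : s.esymm 1 = s.sum := by simp [esymm, powersetCard_one, map_map]
    rw [sum_cons, map_cons, sum_cons, esymm_cons_succ, hesymm_one, add_sq, ih]
    ring

lemma exists_fin_map_eq {α : Type*} {m : ℕ} (s : Multiset α) (hs : card s = m) :
    ∃ y : Fin m → α, univ.val.map y = s := by
  obtain ⟨l, rfl⟩ : ∃ l : List α, (l : Multiset α) = s := ⟨s.toList, s.coe_toList⟩
  rw [coe_card] at hs
  subst hs
  exact ⟨l.get, by rw [Fin.univ_val_map, List.ofFn_get]⟩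

end Multiset

lemma Finset.sum_sum_sub_sq {ι R : Type*} [CommRing R] (s : Finset ι) (f : ι → R) :
    ∑ i ∈ s, ∑ j ∈ s, (f i - f j) ^ 2 = 2 * (#s * ∑ i ∈ s, f i ^ 2 - (∑ i ∈ s, f i) ^ 2) := by
  simp only [sub_sq, sum_add_distrib, sum_sub_distrib, sum_const, nsmul_eq_mul, ← mul_sum,
    ← sum_mul]
  ring

section esym

variable {m : ℕ}

lemma esym_eq_esymm (k : ℕ) (x : Fin m → ℝ) : esym k x = (univ.val.map x).esymm k := by
  rw [Finset.esymm_map_val]; rfl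

lemma esym_zero (x : Fin m → ℝ) : esym 0 x = 1 := by
  simp [esym]

lemma esym_one (x : Fin m → ℝ) : esym 1 x = ∑ i, x i := by
  simp [esym, powersetCard_one]

lemma esym_self (x : Fin m → ℝ) : esym m x = ∏ i, x i := by
  have hself : univ.powersetCard m = {(univ : Finset (Fin m))} := by
    simpa using powersetCard_self (univ : Finset (Fin m))
  rw [esym, hself, sum_singleton]

lemma esym_sub_eq_sum_prod_compl {k : ℕ} (hk : k ≤ m) (x : Fin m → ℝ) :
    esym (m - k) x = ∑ s ∈ univ.powersetCard k, ∏ i ∈ sᶜ, x i := by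
  refine sum_nbij' (·ᶜ) (·ᶜ) ?_ ?_ (fun s _ => compl_compl s) (fun s _ => compl_compl s)
    (fun s _ => by rw [compl_compl]) <;>
  · intro s hs
    simp only [mem_powersetCard, subset_univ, true_and, card_compl, Fintype.card_fin] at hs ⊢
    omega

lemma esym_eq_sum_prod_erase (x : Fin (m + 1) → ℝ) :
    esym m x = ∑ j, ∏ l ∈ univ.erase j, x l := by
  have h := esym_sub_eq_sum_prod_compl (k := 1) (by omega) x
  rw [Nat.add_sub_cancel] at h
  simp [h, powersetCard_one, compl_singleton]

lemma prod_prod_erase_of_card_eq_two (x : Fin m → ℝ) {t : Finset (Fin m)} (ht : #t = 2) :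
    ∏ j ∈ t, ∏ l ∈ univ.erase j, x l = (∏ l, x l) * ∏ l ∈ tᶜ, x l := by
  obtain ⟨a, c, hac, rfl⟩ := card_eq_two.1 ht
  have hcompl : ({a, c} : Finset (Fin m))ᶜ = (univ.erase a).erase c := by
    rw [compl_insert, compl_singleton, erase_right_comm]
  rw [prod_pair hac, hcompl, ← mul_prod_erase univ x (mem_univ a),
    ← mul_prod_erase (univ.erase a) x (by simpa using hac.symm),
    ← mul_prod_erase (univ.erase c) x (by simpa using hac), erase_right_comm]
  ring

lemma esym_mul_esym_self_eq_esym_two (x : Fin (m + 2) → ℝ) :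
    esym m x * esym (m + 2) x = esym 2 (fun j => ∏ l ∈ univ.erase j, x l) := by
  have h := esym_sub_eq_sum_prod_compl (k := 2) (by omega) x
  rw [Nat.add_sub_cancel] at h
  rw [h, esym_self, esym, sum_mul]
  refine sum_congr rfl fun t ht => ?_
  rw [prod_prod_erase_of_card_eq_two x (mem_powersetCard.1 ht).2, mul_comm]

lemma sq_sum_eq_sum_sq_add_two_mul_esym (x : Fin m → ℝ) :
    (∑ i, x i) ^ 2 = ∑ i, x i ^ 2 + 2 * esym 2 x := by
  simpa [esym_eq_esymm, Finset.sum, Multiset.map_map, Function.comp_def] using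
    (univ.val.map x).sq_sum_eq_sum_map_sq_add_two_mul_esymm

lemma coeff_prod_X_sub_C_sub {i : ℕ} (x : Fin m → ℝ) (hi : i ≤ m) :
    (∏ j, (X - C (x j))).coeff (m - i) = (-1) ^ i * esym i x := by
  have h := (univ.val.map x).prod_X_sub_C_coeff (k := m - i) (by simp)
  rw [Multiset.map_map, Multiset.card_map, card_val, card_univ, Fintype.card_fin,
    Nat.sub_sub_self hi] at h
  rw [esym_eq_esymm, ← h]
  rfl

end esym

namespace Polynomial

lemma card_roots_derivative {p : ℝ[X]} (hp : Multiset.card p.roots = p.natDegree) :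
    Multiset.card (derivative p).roots = (derivative p).natDegree := by
  have hrolle := card_roots_le_derivative p
  have hle := card_roots' (derivative p)
  rw [natDegree_derivative] at *
  omega

lemma exists_derivative_eq_C_mul_prod_X_sub_C {p : ℝ[X]} {m : ℕ}
    (hp : Multiset.card p.roots = p.natDegree) (hdeg : p.natDegree = m + 1) :
    ∃ y : Fin m → ℝ, derivative p = C (derivative p).leadingCoeff * ∏ j, (X - C (y j)) := by
  have hroots := card_roots_derivative hp
  obtain ⟨y, hy⟩ := (derivative p).roots.exists_fin_map_eq
    (by rw [hroots, natDegree_derivative, hdeg, Nat.add_sub_cancel])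
  refine ⟨y, ?_⟩
  conv_lhs => rw [← C_leadingCoeff_mul_prod_multiset_X_sub_C hroots, ← hy]
  rw [Multiset.map_map]
  rfl

end Polynomial

lemma exists_esym_eq_of_derivative {m : ℕ} (x : Fin (m + 1) → ℝ) :
    ∃ y : Fin m → ℝ, ∀ i ≤ m, ((m : ℝ) + 1 - i) * esym i x = ((m : ℝ) + 1) * esym i y := by
  set P : ℝ[X] := ∏ j, (X - C (x j))
  have hP : P = ((univ.val.map x).map (X - C ·)).prod := by
    rw [Multiset.map_map]; rfl
  have hdeg : P.natDegree = m + 1 := by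
    rw [hP, natDegree_multiset_prod_X_sub_C_eq_card]; simp
  obtain ⟨y, hy⟩ := exists_derivative_eq_C_mul_prod_X_sub_C
    (by rw [hdeg, hP, roots_multiset_prod_X_sub_C]; simp) hdeg
  have hcoeff : ∀ i ≤ m, ((m : ℝ) + 1 - i) * esym i x =
      (derivative P).leadingCoeff * esym i y := by
    intro i hi
    have h := congrArg (coeff · (m - i)) hy
    simp only [coeff_derivative, coeff_C_mul, coeff_prod_X_sub_C_sub y hi] at h
    rw [show m - i + 1 = m + 1 - i by omega, coeff_prod_X_sub_C_sub x (by omega),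
      show ((m - i : ℕ) : ℝ) + 1 = (m : ℝ) + 1 - i by rw [Nat.cast_sub hi]; ring] at h
    exact mul_left_cancel₀ (pow_ne_zero i (neg_ne_zero.2 one_ne_zero)) (by linear_combination h)
  have hlead : (derivative P).leadingCoeff = (m : ℝ) + 1 := by
    simpa [esym_zero] using (hcoeff 0 (Nat.zero_le m)).symm
  exact ⟨y, fun i hi => hlead ▸ hcoeff i hi⟩

noncomputable def esymMean {m : ℕ} (k : ℕ) (x : Fin m → ℝ) : ℝ := esym k x / m.choose k

section esymMean

variable {m : ℕ}

lemma esymMean_zero (x : Fin m → ℝ) : esymMean 0 x = 1 := by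
  simp [esymMean, esym_zero]

lemma esymMean_pos {k : ℕ} (hk : k ≤ m) {x : Fin m → ℝ} (hx : 0 < esym k x) :
    0 < esymMean k x :=
  div_pos hx (by exact_mod_cast Nat.choose_pos hk)

lemma esymMean_one_sq_sub_esymMean_two (hm : 2 ≤ m) (x : Fin m → ℝ) :
    esymMean 1 x ^ 2 - esymMean 2 x = (∑ i, ∑ j, (x i - x j) ^ 2) / (2 * m ^ 2 * (m - 1)) := by
  have hm' : (2 : ℝ) ≤ m := by exact_mod_cast hm
  have hm0 : (m : ℝ) ≠ 0 := by positivity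
  have hm1 : (m : ℝ) - 1 ≠ 0 := by linarith
  rw [esymMean, esymMean, Nat.choose_one_right, Nat.cast_choose_two, esym_one, sum_sum_sub_sq,
    card_univ, Fintype.card_fin, show esym 2 x = ((∑ i, x i) ^ 2 - ∑ i, x i ^ 2) / 2 by
      linarith [sq_sum_eq_sum_sq_add_two_mul_esym x]]
  field_simp
  ring

lemma esymMean_two_le_sq (hm : 2 ≤ m) (x : Fin m → ℝ) : esymMean 2 x ≤ esymMean 1 x ^ 2 := by
  have hm' : (2 : ℝ) ≤ m := by exact_mod_cast hm
  refine sub_nonneg.1 ?_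
  rw [esymMean_one_sq_sub_esymMean_two hm]
  exact div_nonneg (by positivity) (by nlinarith)

lemma eq_of_esymMean_two_eq_sq (hm : 2 ≤ m) {x : Fin m → ℝ}
    (h : esymMean 2 x = esymMean 1 x ^ 2) (i j : Fin m) : x i = x j := by
  have hm' : (2 : ℝ) ≤ m := by exact_mod_cast hm
  have hsum : ∑ i, ∑ j, (x i - x j) ^ 2 = 0 := by
    have hid := esymMean_one_sq_sub_esymMean_two hm x
    rw [h, sub_self, eq_comm, div_eq_zero_iff] at hid
    exact hid.resolve_right (by nlinarith)
  have hi := (sum_eq_zero_iff_of_nonneg fun _ _ => by positivity).1 hsum i (mem_univ i)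
  have hij := (sum_eq_zero_iff_of_nonneg fun _ _ => sq_nonneg _).1 hi j (mem_univ j)
  exact sub_eq_zero.1 (pow_eq_zero_iff two_ne_zero |>.1 hij)

lemma esymMean_mul_esymMean_le_sq_of_card_eq {k : ℕ} (x : Fin (k + 2) → ℝ) :
    esymMean k x * esymMean (k + 2) x ≤ esymMean (k + 1) x ^ 2 := by
  have hmean2 : esymMean k x * esymMean (k + 2) x =
      esymMean 2 (fun j => ∏ l ∈ univ.erase j, x l) := by
    rw [esymMean, esymMean, esymMean, div_mul_div_comm, esym_mul_esym_self_eq_esym_two,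
      Nat.choose_self, Nat.cast_one, mul_one, Nat.choose_symm_add]
  have hmean1 : esymMean (k + 1) x = esymMean 1 (fun j => ∏ l ∈ univ.erase j, x l) := by
    rw [esymMean, esymMean, esym_eq_sum_prod_erase, esym_one, Nat.choose_succ_self_right,
      Nat.choose_one_right]
  rw [hmean2, hmean1]
  exact esymMean_two_le_sq (by omega) _

lemma exists_esymMean_eq (x : Fin (m + 1) → ℝ) :
    ∃ y : Fin m → ℝ, ∀ i ≤ m, esymMean i y = esymMean i x := by
  obtain ⟨y, hy⟩ := exists_esym_eq_of_derivative x
  refine ⟨y, fun i hi => ?_⟩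
  have hchoose : (m.choose i : ℝ) * (m + 1) = (m + 1).choose i * ((m : ℝ) + 1 - i) := by
    have h := congrArg (Nat.cast : ℕ → ℝ) (Nat.choose_mul_succ_eq m i)
    push_cast [Nat.cast_sub (by omega : i ≤ m + 1)] at h
    exact h
  have hm : (m.choose i : ℝ) ≠ 0 := by exact_mod_cast (Nat.choose_pos hi).ne'
  have hm1 : ((m + 1).choose i : ℝ) ≠ 0 := by exact_mod_cast (Nat.choose_pos (by omega)).ne'
  rw [esymMean, esymMean, div_eq_div_iff hm hm1]
  refine mul_left_cancel₀ (by positivity : (m : ℝ) + 1 ≠ 0) ?_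
  linear_combination (-((m + 1).choose i : ℝ)) * hy i hi - esym i x * hchoose

lemma esymMean_mul_esymMean_le_sq {k : ℕ} (hkm : k + 2 ≤ m) (x : Fin m → ℝ) :
    esymMean k x * esymMean (k + 2) x ≤ esymMean (k + 1) x ^ 2 := by
  induction m, hkm using Nat.le_induction with
  | base => exact esymMean_mul_esymMean_le_sq_of_card_eq x
  | succ m hkm ih =>
    obtain ⟨y, hy⟩ := exists_esymMean_eq x
    rw [← hy k (by omega), ← hy (k + 1) (by omega), ← hy (k + 2) hkm]
    exact ih y

lemma div_mul_esym_mul_esym_one_sub_eq {k : ℕ} (hkm : k < m) (x : Fin m → ℝ) :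
    ((m : ℝ) - k) / m * esym k x * esym 1 x - (k + 1) * esym (k + 1) x =
      (k + 1) * m.choose (k + 1) * (esymMean k x * esymMean 1 x - esymMean (k + 1) x) := by
  have hchoose : (m.choose (k + 1) : ℝ) * (k + 1) = m.choose k * ((m : ℝ) - k) := by
    have h := congrArg (Nat.cast : ℕ → ℝ) (Nat.choose_succ_right_eq m k)
    push_cast [Nat.cast_sub hkm.le] at h
    exact h
  have hm : (m : ℝ) ≠ 0 := by exact_mod_cast (by omega : m ≠ 0)
  have hck : (m.choose k : ℝ) ≠ 0 := by exact_mod_cast (Nat.choose_pos hkm.le).ne'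
  have hck1 : (m.choose (k + 1) : ℝ) ≠ 0 := by exact_mod_cast (Nat.choose_pos hkm).ne'
  rw [esymMean, esymMean, esymMean, Nat.choose_one_right]
  field_simp
  linear_combination (-(esym k x * esym 1 x)) * hchoose

end esymMean

lemma mul_lt_mul_of_sq_lt_of_logConcave {a : ℕ → ℝ} {k : ℕ} (hk : 1 ≤ k)
    (hpos : ∀ j ≤ k, 0 < a j) (hlc : ∀ j < k, a j * a (j + 2) ≤ a (j + 1) ^ 2)
    (h2 : a 0 * a 2 < a 1 ^ 2) : a 0 * a (k + 1) < a k * a 1 := by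
  induction k, hk using Nat.le_induction with
  | base => simpa [sq] using h2
  | succ k hk ih =>
    have ih := ih (fun j hj => hpos j (by omega)) (fun j hj => hlc j (by omega))
    have h0 := hpos 0 (by omega)
    have hk1 := hpos (k + 1) le_rfl
    nlinarith [mul_lt_mul_of_pos_left ih hk1, mul_le_mul_of_nonneg_left (hlc k (by omega)) h0.le,
      hpos k (by omega)]

/-- For λ in the open cone Γ_k^+, equality in the Newton-type inequality
forces all components of λ to be equal. -/
theorem newton_eq_open_cone (n k : ℕ) (hk : 1 ≤ k) (hkn : k ≤ n)
    (lam : Fin (n+1) → ℝ)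
    (hcone : ∀ j, 1 ≤ j → j ≤ k → 0 < esym j lam)
    (heq : (((n : ℝ) + 1 - k) / ((n : ℝ) + 1)) * esym k lam * esym 1 lam
        - ((k : ℝ) + 1) * esym (k+1) lam = 0) :
    ∀ i j : Fin (n+1), lam i = lam j := by
  set p : ℕ → ℝ := fun j => esymMean j lam
  have hp0 : p 0 = 1 := esymMean_zero lam
  have hpos : ∀ j ≤ k, 0 < p j := fun j hj => by
    rcases Nat.eq_zero_or_pos j with rfl | hj0
    · exact hp0 ▸ one_pos
    · exact esymMean_pos (by omega) (hcone j hj0 hj)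
  have hnewton : ∀ j < k, p j * p (j + 2) ≤ p (j + 1) ^ 2 := fun j hj =>
    esymMean_mul_esymMean_le_sq (by omega) lam
  have hsucc : p (k + 1) = p k * p 1 := by
    have h := div_mul_esym_mul_esym_one_sub_eq (m := n + 1) (k := k) (by omega) lam
    push_cast at h
    rw [heq, eq_comm, mul_eq_zero, sub_eq_zero] at h
    exact (h.resolve_left <| mul_ne_zero (by positivity) <| by
      exact_mod_cast (Nat.choose_pos (by omega)).ne').symm
  have h2 : p 0 * p 2 = p 1 ^ 2 := by
    refine (hnewton 0 hk).antisymm (not_lt.1 fun hlt => ?_)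
    have hlt' := mul_lt_mul_of_sq_lt_of_logConcave hk hpos hnewton hlt
    rw [hp0, one_mul, hsucc] at hlt'
    exact lt_irrefl _ hlt'
  rw [hp0, one_mul] at h2
  exact eq_of_esymMean_two_eq_sq (by omega) h2
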